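/- arXiv:1811.08382 — 4 statements merged into one kernel-verified Lean document; each statement's English description precedes it below -/
import Mathlib

section
/- Let f : X → ℝ have sensitivity Δ, i.e., |f(x) − f(x')| ≤ Δ for all x, x' ∈ X. Then the Laplace mechanism M(x) = f(x) + Lap(Δ/ε), where Lap(b) has density (1/2b)·exp(−|t|/b), satisfies: for all x, x' ∈ X and all measurable S ⊆ ℝ, P[M(x) ∈ S] ≤ e^ε · P[M(x') ∈ S]. -/
open MeasureTheory

/-- The Laplace distribution with scale `b`, given by density (1/(2b))·exp(-|t|/b). -/
noncomputable def laplaceMeasure (b : ℝ) : Measure ℝ :=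
  volume.withDensity (fun t => ENNReal.ofReal (1 / (2 * b) * Real.exp (-|t| / b)))

/-!
Shifting the noise by `d` changes the Laplace density pointwise by a factor at most `exp (|d| / b)`,
since `|t| ≤ |t - d| + |d|`. Writing `M x` as the shift of `M x'` by `f x - f x'`, sensitivity `Δ`
and scale `b = Δ / ε` bound that factor by `exp ε`.
-/

theorem map_const_add_withDensity (c : ℝ) (g : ℝ → ENNReal) :
    (volume.withDensity g).map (c + ·) = volume.withDensity (fun s => g (s - c)) := by
  ext S hS
  rw [Measure.map_apply (measurable_const_add c) hS, withDensity_apply _ hS,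
    withDensity_apply _ (measurable_const_add c hS),
    ← (measurePreserving_add_left volume c).setLIntegral_comp_preimage_emb
      (measurableEmbedding_addLeft c) (fun s => g (s - c)) S]
  simp only [add_sub_cancel_left]

theorem laplace_density_sub_le {b : ℝ} (hb : 0 < b) (s d : ℝ) :
    Real.exp (-|s - d| / b) ≤ Real.exp (|d| / b) * Real.exp (-|s| / b) := by
  rw [← Real.exp_add, ← add_div]
  gcongr
  linarith [abs_sub_abs_le_abs_sub s d]

theorem laplaceMeasure_map_const_add_le (b d : ℝ) :
    (laplaceMeasure b).map (d + ·) ≤ ENNReal.ofReal (Real.exp (|d| / b)) • laplaceMeasure b := by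
  rw [laplaceMeasure, map_const_add_withDensity,
    ← withDensity_smul' _ _ ENNReal.ofReal_ne_top]
  refine withDensity_mono (ae_of_all _ fun s => ?_)
  simp only [Pi.smul_apply, smul_eq_mul]
  rcases le_or_gt b 0 with hb | hb
  · rw [ENNReal.ofReal_of_nonpos (mul_nonpos_of_nonpos_of_nonneg
      (one_div_nonpos.2 (by linarith)) (Real.exp_pos _).le)]
    exact zero_le
  · rw [← ENNReal.ofReal_mul (Real.exp_pos _).le, mul_left_comm]
    exact ENNReal.ofReal_le_ofReal
      (mul_le_mul_of_nonneg_left (laplace_density_sub_le hb s d) (by positivity))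

theorem laplace_mechanism_private_general {X : Type*} (ε Δ : ℝ) (hε : 0 < ε)
    (f : X → ℝ) (hf : ∀ x x' : X, |f x - f x'| ≤ Δ)
    (M : X → Measure ℝ)
    (hM : ∀ x, M x = Measure.map (fun t => f x + t) (laplaceMeasure (Δ / ε))) :
    ∀ x x' : X, ∀ S : Set ℝ, MeasurableSet S →
      M x S ≤ ENNReal.ofReal (Real.exp ε) * M x' S := by
  intro x x' S _
  set b := Δ / ε
  set d := f x - f x'
  have hshift : M x = ((laplaceMeasure b).map (d + ·)).map (f x' + ·) := by
    rw [hM, Measure.map_map (measurable_const_add _) (measurable_const_add _)]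
    congr 1
    funext t
    simp only [Function.comp_apply, d]
    ring
  have hΔ_nonneg : 0 ≤ Δ := by simpa using hf x x
  have hexponent : |d| / b ≤ ε := by
    rw [div_div_eq_mul_div]
    exact div_le_of_le_mul₀ hΔ_nonneg hε.le (by nlinarith [hf x x'])
  calc M x S ≤ (ENNReal.ofReal (Real.exp (|d| / b)) • laplaceMeasure b).map (f x' + ·) S := by
        rw [hshift]
        exact Measure.le_iff'.1
          (Measure.map_mono (laplaceMeasure_map_const_add_le b d) (measurable_const_add _)) S
    _ = ENNReal.ofReal (Real.exp (|d| / b)) * M x' S := by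
        rw [Measure.map_smul, hM]
        rfl
    _ ≤ ENNReal.ofReal (Real.exp ε) * M x' S := by
        gcongr

/-- The Laplace mechanism for a sensitivity-Δ function is (ε,0)-differentially private. -/
theorem laplace_mechanism_private {X : Type*} (ε Δ : ℝ) (hε : 0 < ε) (hΔ : 0 < Δ)
    (f : X → ℝ) (hf : ∀ x x' : X, |f x - f x'| ≤ Δ)
    (M : X → Measure ℝ)
    (hM : ∀ x, M x = Measure.map (fun t => f x + t) (laplaceMeasure (Δ / ε))) :
    ∀ x x' : X, ∀ S : Set ℝ, MeasurableSet S →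
      M x S ≤ ENNReal.ofReal (Real.exp ε) * M x' S :=
  laplace_mechanism_private_general ε Δ hε f hf M hM
end

section
/- Let f be the density of N(μ, σ²), let s be a real number with |s − μ| ≤ 6σ, and let ρ ≥ 6 + sqrt(2·ln(2√n)) for some n ≥ 1. Then |∫_{−∞}^{s − ρσ} (x − μ)·f(x) dx| ≤ σ/√n. -/
/-!
Since `(x - μ) f(x)` has the antiderivative `-σ² f(x)`, the truncated first moment equals
`-(σ / √(2π)) exp (-(a - μ)² / (2σ²))` at the cut-off `a = s - ρσ`. The hypotheses place `a` at
least `√(2 log (2√n))` standard deviations below `μ`, where this Gaussian factor is at most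
`1 / (2√n)`.
-/

open MeasureTheory Real Set Filter Topology

theorem integral_Iic_sub_mul_exp_neg_mul_sq {b : ℝ} (hb : 0 < b) (μ a : ℝ) :
    ∫ x in Iic a, (x - μ) * exp (-b * (x - μ) ^ 2) = -(2 * b)⁻¹ * exp (-b * (a - μ) ^ 2) := by
  set F : ℝ → ℝ := fun y => -(2 * b)⁻¹ * exp (-b * y ^ 2)
  have hF : ∀ y, HasDerivAt F (y * exp (-b * y ^ 2)) y := fun y => by
    refine (((hasDerivAt_pow 2 y).const_mul (-b)).exp.const_mul (-(2 * b)⁻¹)).congr_deriv ?_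
    field_simp
    norm_num
  have hsq : Tendsto (fun y : ℝ => y ^ 2) atBot atTop := by
    simpa only [Function.comp_def, neg_sq] using
      (tendsto_pow_atTop (α := ℝ) two_ne_zero).comp tendsto_neg_atBot_atTop
  have hF_atBot : Tendsto F atBot (𝓝 0) := by
    simpa only [mul_zero, Function.comp_def] using (tendsto_exp_atBot.comp
      (hsq.const_mul_atTop_of_neg (neg_lt_zero.2 hb))).const_mul (-(2 * b)⁻¹)
  simpa only [sub_zero] using integral_Iic_of_hasDerivAt_of_tendsto'
    (fun x _ => (hF (x - μ)).comp_sub_const x μ)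
    ((integrable_mul_exp_neg_mul_sq hb).comp_sub_right μ).integrableOn
    (hF_atBot.comp (tendsto_atBot_add_const_right _ (-μ) tendsto_id))

theorem integral_Iic_sub_mul_gaussian (μ : ℝ) {σ : ℝ} (hσ : σ ≠ 0) (a : ℝ) :
    ∫ x in Iic a, (x - μ) * (1 / (σ * √(2 * π)) * exp (-(x - μ) ^ 2 / (2 * σ ^ 2)))
      = -(σ / √(2 * π)) * exp (-(a - μ) ^ 2 / (2 * σ ^ 2)) := by
  have hexp (y : ℝ) : -y ^ 2 / (2 * σ ^ 2) = -(2 * σ ^ 2)⁻¹ * y ^ 2 := by ring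
  simp_rw [hexp, mul_left_comm _ (1 / (σ * √(2 * π))), integral_const_mul,
    integral_Iic_sub_mul_exp_neg_mul_sq (by positivity : 0 < (2 * σ ^ 2)⁻¹)]
  field_simp

theorem exp_neg_sq_div_le_exp_neg_sq_div_two {σ t y : ℝ} (hσ : 0 < σ) (ht : 0 ≤ t)
    (hy : t * σ ≤ |y|) : exp (-y ^ 2 / (2 * σ ^ 2)) ≤ exp (-t ^ 2 / 2) := by
  have hsq : (t * σ) ^ 2 ≤ y ^ 2 := by
    simpa only [sq_abs] using pow_le_pow_left₀ (by positivity) hy 2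
  rw [exp_le_exp, div_le_div_iff₀ (by positivity) two_pos]
  nlinarith

theorem exp_neg_sqrt_two_mul_log_sq_div_two {c : ℝ} (hc : 1 ≤ c) :
    exp (-√(2 * log c) ^ 2 / 2) = c⁻¹ := by
  rw [sq_sqrt (by linarith [log_nonneg hc]), neg_div, mul_div_cancel_left₀ _ two_ne_zero,
    exp_neg, exp_log (by linarith)]

/-- Truncation-bias bound for the Gaussian density: with |s − μ| ≤ 6σ and
ρ ≥ 6 + sqrt(2·ln(2√n)), the lower-tail first-moment integral is at most σ/√n. -/
theorem gaussian_truncation_bias (μ σ s ρ : ℝ) (n : ℝ) (hσ : 0 < σ) (hn : 1 ≤ n)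
    (hs : |s - μ| ≤ 6 * σ) (hρ : ρ ≥ 6 + Real.sqrt (2 * Real.log (2 * Real.sqrt n))) :
    |∫ x in Set.Iic (s - ρ * σ),
        (x - μ) * (1 / (σ * Real.sqrt (2 * Real.pi)) * Real.exp (-(x - μ) ^ 2 / (2 * σ ^ 2)))|
      ≤ σ / Real.sqrt n := by
  have h2n : 1 ≤ 2 * √n := by nlinarith [one_le_sqrt.mpr hn]
  set t := √(2 * log (2 * √n))
  have htail : t * σ ≤ |s - ρ * σ - μ| :=
    calc t * σ ≤ -(s - ρ * σ - μ) := by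
          nlinarith [(abs_le.mp hs).2, mul_le_mul_of_nonneg_right hρ hσ.le]
      _ ≤ |s - ρ * σ - μ| := neg_le_abs _
  have h2π : 1 ≤ 2 * √(2 * π) := by
    nlinarith [one_le_sqrt.mpr (by linarith [pi_gt_three] : (1 : ℝ) ≤ 2 * π)]
  rw [integral_Iic_sub_mul_gaussian μ hσ.ne', abs_mul, abs_neg, abs_of_pos (by positivity),
    abs_exp]
  calc σ / √(2 * π) * exp (-(s - ρ * σ - μ) ^ 2 / (2 * σ ^ 2))
      ≤ σ / √(2 * π) * (2 * √n)⁻¹ := by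
        gcongr
        rw [← exp_neg_sqrt_two_mul_log_sq_div_two h2n]
        exact exp_neg_sq_div_le_exp_neg_sq_div_two hσ (sqrt_nonneg _) htail
    _ = σ / √n * (2 * √(2 * π))⁻¹ := by ring
    _ ≤ σ / √n := mul_le_of_le_one_right (by positivity) (inv_le_one_of_one_le₀ h2π)
end

section
/- Let X be a random variable on a finite set, and let Q be an (ε,0)-local randomizer applied to X, producing Y = Q(X); i.e., for all x, x' and all outputs y, P[Y=y|X=x] ≤ e^ε·P[Y=y|X=x']. Then the mutual information satisfies I(X; Y) ≤ ε·(e^ε − 1). (A weaker but sufficient version: I(X;Y) ≤ 4(e^ε − 1)².) -/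
open scoped BigOperators

/-- Mutual information (in nats) of a finite joint distribution given as `j`. -/
noncomputable def mutualInfo {A B : Type*} [Fintype A] [Fintype B] (j : A → B → ℝ) : ℝ :=
  ∑ a, ∑ b, j a b * Real.log (j a b / ((∑ b', j a b') * (∑ a', j a' b)))

private lemma ptwise (ε p q : ℝ) (hε : 0 < ε) (hp : 0 ≤ p) (hq : 0 ≤ q)
    (h1 : p ≤ Real.exp ε * q) (h2 : q ≤ Real.exp ε * p) :
    p * Real.log (p / q) - p + q ≤ ε * (Real.exp ε - 1) * q := by
  rcases hq.eq_or_lt with hq0 | hq0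
  · have hp0 : p = 0 := le_antisymm (by simpa [← hq0] using h1) hp
    simp [hp0, ← hq0]
  · have hp0 : 0 < p := by
      by_contra h
      push_neg at h
      have : p = 0 := le_antisymm h hp
      rw [this, mul_zero] at h2
      exact absurd h2 (not_le.mpr hq0)
    set r : ℝ := p / q with hr
    have hr0 : 0 < r := div_pos hp0 hq0
    have hrle : r ≤ Real.exp ε := by
      rw [hr, div_le_iff₀ hq0]
      linarith [h1]
    have hrge : Real.exp (-ε) ≤ r := by
      rw [Real.exp_neg, hr, le_div_iff₀ hq0]
      rw [inv_mul_le_iff₀ (Real.exp_pos ε)]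
      linarith [h2]
    have hlog_le : Real.log r ≤ ε := by
      rw [← Real.log_exp ε]
      exact Real.log_le_log hr0 hrle
    have hlog_ge : -ε ≤ Real.log r := by
      rw [← Real.log_exp (-ε)]
      exact Real.log_le_log (Real.exp_pos _) hrge
    have hfact : r * Real.log r - r + 1 ≤ (r - 1) * Real.log r := by
      have := Real.log_le_sub_one_of_pos hr0
      nlinarith
    have hbound : (r - 1) * Real.log r ≤ ε * (Real.exp ε - 1) := by
      rcases le_or_gt 1 r with h | h
      · have hl0 : 0 ≤ Real.log r := Real.log_nonneg h
        have : r - 1 ≤ Real.exp ε - 1 := by linarith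
        calc (r - 1) * Real.log r ≤ (Real.exp ε - 1) * ε := by
              apply mul_le_mul this hlog_le hl0 (by linarith [Real.one_le_exp hε.le])
          _ = ε * (Real.exp ε - 1) := by ring
      · have hl0 : Real.log r ≤ 0 := Real.log_nonpos hr0.le h.le
        have h1r : 1 - r ≤ Real.exp ε - 1 := by
          have he : Real.exp (-ε) = (Real.exp ε)⁻¹ := Real.exp_neg ε
          have hepos := Real.exp_pos ε
          have h2e : 2 ≤ Real.exp ε + (Real.exp ε)⁻¹ := by
            rw [← sub_nonneg]
            have : Real.exp ε + (Real.exp ε)⁻¹ - 2 = (Real.exp ε - 1)^2 / Real.exp ε := by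
              field_simp
              ring
            rw [this]
            positivity
          nlinarith [hrge]
        calc (r - 1) * Real.log r = (1 - r) * (-Real.log r) := by ring
          _ ≤ (Real.exp ε - 1) * ε := by
              apply mul_le_mul h1r (by linarith) (by linarith) (by linarith [Real.one_le_exp hε.le])
          _ = ε * (Real.exp ε - 1) := by ring
    have hkey : r * Real.log r - r + 1 ≤ ε * (Real.exp ε - 1) := hfact.trans hbound
    have hpq : q * r = p := by
      rw [hr]
      field_simp
    calc p * Real.log (p / q) - p + q = q * r * Real.log r - q * r + q := by
          rw [hpq, hr]
      _ = q * (r * Real.log r - r + 1) := by ring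
      _ ≤ q * (ε * (Real.exp ε - 1)) :=
          mul_le_mul_of_nonneg_left hkey hq0.le
      _ = ε * (Real.exp ε - 1) * q := by ring

/-- Mutual information bound for an (ε,0)-locally private channel:
I(X;Y) ≤ ε·(e^ε − 1), and in particular I(X;Y) ≤ 4(e^ε − 1)². -/
theorem mutualInfo_private_channel {X Y : Type*} [Fintype X] [Fintype Y]
    (ε : ℝ) (hε : 0 < ε) (pX : X → ℝ) (hpX : ∀ x, 0 ≤ pX x) (hpX1 : ∑ x, pX x = 1)
    (Q : X → Y → ℝ) (hQ : ∀ x y, 0 ≤ Q x y) (hQ1 : ∀ x, ∑ y, Q x y = 1)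
    (hdp : ∀ x x' y, Q x y ≤ Real.exp ε * Q x' y) :
    mutualInfo (fun x y => pX x * Q x y) ≤ ε * (Real.exp ε - 1) ∧
    mutualInfo (fun x y => pX x * Q x y) ≤ 4 * (Real.exp ε - 1) ^ 2 := by
  set qY : Y → ℝ := fun y => ∑ x, pX x * Q x y with hqY
  have hqY0 : ∀ y, 0 ≤ qY y := fun y =>
    Finset.sum_nonneg fun x _ => mul_nonneg (hpX x) (hQ x y)
  have hqY1 : ∑ y, qY y = 1 := by
    rw [hqY]
    rw [Finset.sum_comm]
    simp_rw [← Finset.mul_sum, hQ1, mul_one]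
    exact hpX1
  have hrow : ∀ x, ∑ y, pX x * Q x y = pX x := fun x => by
    rw [← Finset.mul_sum, hQ1, mul_one]
  -- DP bounds relating Q x y and qY y
  have hub : ∀ x y, Q x y ≤ Real.exp ε * qY y := by
    intro x y
    have : Q x y = ∑ x', pX x' * Q x y := by
      rw [← Finset.sum_mul, hpX1, one_mul]
    rw [this, hqY, Finset.mul_sum]
    apply Finset.sum_le_sum
    intro x' _
    calc pX x' * Q x y ≤ pX x' * (Real.exp ε * Q x' y) :=
          mul_le_mul_of_nonneg_left (hdp x x' y) (hpX x')
      _ = Real.exp ε * (pX x' * Q x' y) := by ring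
  have hlb : ∀ x y, qY y ≤ Real.exp ε * Q x y := by
    intro x y
    have h2 : Real.exp ε * Q x y = ∑ x', pX x' * (Real.exp ε * Q x y) := by
      rw [← Finset.sum_mul, hpX1, one_mul]
    rw [hqY, h2]
    apply Finset.sum_le_sum
    intro x' _
    exact mul_le_mul_of_nonneg_left (hdp x' x y) (hpX x')
  have step1 : mutualInfo (fun x y => pX x * Q x y)
      = ∑ x, pX x * ∑ y, (Q x y * Real.log (Q x y / qY y)) := by
    unfold mutualInfo
    refine Finset.sum_congr rfl fun x _ => ?_
    rw [Finset.mul_sum]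
    refine Finset.sum_congr rfl fun y _ => ?_
    have hr := hrow x
    simp only []
    rw [hr]
    rcases (hpX x).eq_or_lt with h | h
    · simp [← h]
    · rw [mul_div_mul_left _ _ (ne_of_gt h), mul_assoc]
  have step2 : ∑ x, pX x * ∑ y, (Q x y * Real.log (Q x y / qY y))
      = ∑ x, pX x * ∑ y, (Q x y * Real.log (Q x y / qY y) - Q x y + qY y) := by
    refine Finset.sum_congr rfl fun x _ => ?_
    congr 1
    rw [Finset.sum_add_distrib, Finset.sum_sub_distrib, hQ1 x, hqY1]
    ring
  have key : mutualInfo (fun x y => pX x * Q x y) ≤ ε * (Real.exp ε - 1) := by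
    rw [step1, step2]
    have hinner : ∀ x, ∑ y, (Q x y * Real.log (Q x y / qY y) - Q x y + qY y)
        ≤ ε * (Real.exp ε - 1) := by
      intro x
      calc ∑ y, (Q x y * Real.log (Q x y / qY y) - Q x y + qY y)
          ≤ ∑ y, ε * (Real.exp ε - 1) * qY y := by
            apply Finset.sum_le_sum
            intro y _
            exact ptwise ε (Q x y) (qY y) hε (hQ x y) (hqY0 y) (hub x y) (hlb x y)
        _ = ε * (Real.exp ε - 1) := by
            rw [← Finset.mul_sum, hqY1, mul_one]
    calc ∑ x, pX x * ∑ y, (Q x y * Real.log (Q x y / qY y) - Q x y + qY y)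
        ≤ ∑ x, pX x * (ε * (Real.exp ε - 1)) := by
          apply Finset.sum_le_sum
          intro x _
          exact mul_le_mul_of_nonneg_left (hinner x) (hpX x)
      _ = ε * (Real.exp ε - 1) := by
          rw [← Finset.sum_mul, hpX1, one_mul]
  refine ⟨key, key.trans ?_⟩
  nlinarith [Real.add_one_le_exp ε, hε.le]
end

section
/- Let k ≥ 1, β ∈ (0,1), ε > 0. Suppose each of k users independently reports, via ε-randomized response on {0,1,2,3} (truth with probability e^ε/(e^ε+3), otherwise uniform among the other three), a value y_i; let H(a) = |{i : y_i = a}| be the true histogram and C(a) the observed histogram of reports. Define the debiased estimate Ĥ(a) = ((e^ε+3)/(e^ε−1))·(C(a) − k/(e^ε+3)). Then with probability at least 1 − β, for all a ∈ {0,1,2,3}, |Ĥ(a) − H(a)| ≤ ((ε+4)/(ε√2))·sqrt(k·ln(8/β)). -/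
/-!
For each value `a`, the count `C(a)` of reports equal to `a` is a sum of `k` independent
indicators with mean `H(a) e^ε/(e^ε+3) + (k - H(a))/(e^ε+3)`, so
`Ĥ(a) - H(a) = ((e^ε+3)/(e^ε-1)) (C(a) - 𝔼 C(a))`. Hoeffding's inequality bounds
`|C(a) - 𝔼 C(a)|` by `t = √(k ln(8/β) / 2)` outside an event of probability `β/4`; a union bound
over the four values leaves probability `1 - β`, and `(e^ε+3)/(e^ε-1) < (ε+4)/ε` turns
`((e^ε+3)/(e^ε-1)) t` into the stated bound.
-/

open MeasureTheory ProbabilityTheory Real Finset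
open scoped NNReal

lemma Finset.sum_ite_eq_card_mul_add {ι α : Type*} [Fintype ι] [DecidableEq α] (y : ι → α) (a : α)
    (p q : ℝ) :
    ∑ i, (if a = y i then p else q) =
      #{i | y i = a} * p + (Fintype.card ι - #{i | y i = a}) * q := by
  have hcard := card_filter_add_card_filter_not (s := univ) (fun i ↦ y i = a)
  rw [card_univ] at hcard
  simp only [eq_comm (a := a), sum_ite, sum_const, nsmul_eq_mul, ← hcard]
  push_cast
  ring

lemma Real.exp_add_three_div_exp_sub_one_lt {ε : ℝ} (hε : 0 < ε) :
    (exp ε + 3) / (exp ε - 1) < (ε + 4) / ε := by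
  have hexp := add_one_lt_exp hε.ne'
  rw [div_lt_div_iff₀ (by linarith) hε]
  nlinarith

namespace ProbabilityTheory

variable {Ω : Type*} [MeasurableSpace Ω] {μ : Measure Ω}

lemma sum_measureReal_eq_card_mul_add {ι α : Type*} [Fintype ι] [DecidableEq α]
    {Y : ι → Ω → α} {y : ι → α} {p q : ℝ} (hp : 0 ≤ p) (hq : 0 ≤ q)
    (hlaw : ∀ i a, μ {ω | Y i ω = a} = ENNReal.ofReal (if a = y i then p else q)) (a : α) :
    ∑ i, μ.real {ω | Y i ω = a} = #{i | y i = a} * p + (Fintype.card ι - #{i | y i = a}) * q := by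
  rw [← sum_ite_eq_card_mul_add]
  refine sum_congr rfl fun i _ ↦ ?_
  rw [measureReal_def, hlaw, ENNReal.toReal_ofReal (by split_ifs <;> assumption)]

variable [IsProbabilityMeasure μ]

lemma HasSubgaussianMGF.measureReal_le_abs_le {X : Ω → ℝ} {c : ℝ≥0}
    (h : HasSubgaussianMGF X c μ) {t : ℝ} (ht : 0 ≤ t) :
    μ.real {ω | t ≤ |X ω|} ≤ 2 * exp (-t ^ 2 / (2 * c)) := by
  have hsub : {ω | t ≤ |X ω|} ⊆ {ω | t ≤ X ω} ∪ {ω | t ≤ (-X) ω} := fun ω (hω : t ≤ |X ω|) ↦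
    le_abs.1 hω
  calc μ.real {ω | t ≤ |X ω|}
      ≤ μ.real {ω | t ≤ X ω} + μ.real {ω | t ≤ (-X) ω} :=
        (measureReal_mono hsub).trans (measureReal_union_le _ _)
    _ ≤ exp (-t ^ 2 / (2 * c)) + exp (-t ^ 2 / (2 * c)) :=
        add_le_add (h.measure_ge_le ht) (h.neg.measure_ge_le ht)
    _ = 2 * exp (-t ^ 2 / (2 * c)) := by ring

lemma measureReal_le_abs_sum_sub_integral_le {ι : Type*} {X : ι → Ω → ℝ}
    (hindep : iIndepFun X μ) (hmeas : ∀ i, AEMeasurable (X i) μ) {a b : ℝ}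
    (hX : ∀ i, ∀ᵐ ω ∂μ, X i ω ∈ Set.Icc a b) (s : Finset ι) {t : ℝ} (ht : 0 ≤ t) :
    μ.real {ω | t ≤ |∑ i ∈ s, (X i ω - μ[X i])|} ≤
      2 * exp (-2 * t ^ 2 / (#s * (b - a) ^ 2)) := by
  have hcentered : iIndepFun (fun i ω ↦ X i ω - μ[X i]) μ :=
    hindep.comp (fun i x ↦ x - ∫ ω, X i ω ∂μ) fun i ↦ measurable_id.sub_const _
  have hsum := (HasSubgaussianMGF.sum_of_iIndepFun hcentered (s := s)
    fun i _ ↦ hasSubgaussianMGF_of_mem_Icc (hmeas i) (hX i)).measureReal_le_abs_le ht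
  convert hsum using 3
  push_cast
  rw [sum_const, nsmul_eq_mul, Real.norm_eq_abs, div_pow, sq_abs,
    show 2 * (#s * ((b - a) ^ 2 / 2 ^ 2)) = #s * (b - a) ^ 2 / 2 by ring, div_div_eq_mul_div]
  ring

lemma measureReal_le_abs_card_sub_sum_le {ι α : Type*} [Fintype ι] [MeasurableSpace α]
    [MeasurableSingletonClass α] [DecidableEq α] {Y : ι → Ω → α}
    (hmeas : ∀ i, Measurable (Y i)) (hindep : iIndepFun Y μ) (a : α) {t : ℝ} (ht : 0 ≤ t) :
    μ.real {ω | t ≤ |(#{i | Y i ω = a} : ℝ) - ∑ i, μ.real {ω | Y i ω = a}|} ≤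
      2 * exp (-2 * t ^ 2 / Fintype.card ι) := by
  set X : ι → Ω → ℝ := fun i ↦ ({a} : Set α).indicator 1 ∘ Y i
  have hindepX : iIndepFun X μ :=
    hindep.comp _ fun _ ↦ measurable_one.indicator (measurableSet_singleton a)
  have hX : ∀ i, X i = (Y i ⁻¹' {a}).indicator 1 := fun i ↦
    funext fun ω ↦ (Set.indicator_comp_right (Y i)).symm
  have hcount : ∀ ω, (#{i | Y i ω = a} : ℝ) = ∑ i, X i ω := fun ω ↦ by
    simp only [X, Function.comp_apply, Set.indicator_apply, Set.mem_singleton_iff, Pi.one_apply,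
      sum_boole]
  have hmean : ∀ i, μ[X i] = μ.real {ω | Y i ω = a} := fun i ↦ by
    rw [hX, integral_indicator_one (hmeas i (measurableSet_singleton a))]; rfl
  have hmeasX : ∀ i, Measurable (X i) := fun i ↦
    (measurable_one.indicator (measurableSet_singleton a)).comp (hmeas i)
  have hbound : ∀ i ω, X i ω ∈ Set.Icc (0 : ℝ) 1 := fun i ω ↦ by
    by_cases h : Y i ω = a <;> simp [X, h]
  simpa [hcount, hmean, sum_sub_distrib] using
    measureReal_le_abs_sum_sub_integral_le hindepX (fun i ↦ (hmeasX i).aemeasurable)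
      (fun i ↦ ae_of_all _ (hbound i)) univ ht

lemma one_sub_measureReal_compl_le (s : Set Ω) : 1 - μ.real sᶜ ≤ μ.real s := by
  have := measureReal_union_le (μ := μ) s sᶜ
  rw [Set.union_compl_self, probReal_univ] at this
  linarith

lemma one_sub_card_mul_le_measureReal_forall_abs_card_sub_sum_le {ι α : Type*} [Fintype ι]
    [Fintype α] [MeasurableSpace α] [MeasurableSingletonClass α] [DecidableEq α]
    {Y : ι → Ω → α} (hmeas : ∀ i, Measurable (Y i)) (hindep : iIndepFun Y μ) {t : ℝ}
    (ht : 0 ≤ t) :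
    1 - Fintype.card α * (2 * exp (-2 * t ^ 2 / Fintype.card ι)) ≤
      μ.real {ω | ∀ a, |(#{i | Y i ω = a} : ℝ) - ∑ i, μ.real {ω | Y i ω = a}| ≤ t} := by
  set D : α → Ω → ℝ := fun a ω ↦ |(#{i | Y i ω = a} : ℝ) - ∑ i, μ.real {ω | Y i ω = a}|
  have hcompl : {ω | ∀ a, D a ω ≤ t}ᶜ ⊆ ⋃ a, {ω | t ≤ D a ω} := fun ω hω ↦ by
    simp only [Set.mem_compl_iff, Set.mem_ofPred_eq, not_forall, not_le] at hω
    obtain ⟨a, ha⟩ := hω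
    exact Set.mem_iUnion.2 ⟨a, ha.le⟩
  have hbad : μ.real {ω | ∀ a, D a ω ≤ t}ᶜ ≤
      Fintype.card α * (2 * exp (-2 * t ^ 2 / Fintype.card ι)) :=
    calc μ.real {ω | ∀ a, D a ω ≤ t}ᶜ ≤ ∑ a, μ.real {ω | t ≤ D a ω} :=
          (measureReal_mono hcompl).trans (measureReal_iUnion_fintype_le _)
      _ ≤ ∑ _a : α, 2 * exp (-2 * t ^ 2 / Fintype.card ι) :=
          sum_le_sum fun a _ ↦ measureReal_le_abs_card_sub_sum_le hmeas hindep a ht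
      _ = _ := by rw [sum_const, card_univ, nsmul_eq_mul]
  linarith [one_sub_measureReal_compl_le (μ := μ) {ω | ∀ a, D a ω ≤ t}]

end ProbabilityTheory

lemma rr_debias_sub_eq {E : ℝ} (hE : 1 < E) (k H C : ℝ) :
    (E + 3) / (E - 1) * (C - k / (E + 3)) - H =
      (E + 3) / (E - 1) * (C - (H * (E / (E + 3)) + (k - H) * (1 / (E + 3)))) := by
  have : E - 1 ≠ 0 := by linarith
  have : E + 3 ≠ 0 := by linarith
  field_simp
  ring

/-- Accuracy of the debiased randomized-response histogram: with probability at least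
1 − β, for all a, |Ĥ(a) − H(a)| ≤ ((ε+4)/(ε√2))·√(k·ln(8/β)). -/
theorem rr_histogram_accuracy {Ω : Type*} [MeasurableSpace Ω] (μ : Measure Ω)
    [IsProbabilityMeasure μ] (k : ℕ) (hk : 1 ≤ k) (ε β : ℝ) (hε : 0 < ε)
    (hβ0 : 0 < β) (hβ1 : β < 1)
    (y : Fin k → Fin 4) (Y : Fin k → Ω → Fin 4) (hmeas : ∀ i, Measurable (Y i))
    (hindep : iIndepFun Y μ)
    (hlaw : ∀ i a, μ {ω | Y i ω = a} =
      ENNReal.ofReal (if a = y i then Real.exp ε / (Real.exp ε + 3)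
        else 1 / (Real.exp ε + 3))) :
    μ {ω | ∀ a : Fin 4,
        |((Real.exp ε + 3) / (Real.exp ε - 1)) *
            (((Finset.univ.filter (fun i => Y i ω = a)).card : ℝ)
              - k / (Real.exp ε + 3))
          - ((Finset.univ.filter (fun i => y i = a)).card : ℝ)|
          ≤ ((ε + 4) / (ε * Real.sqrt 2)) * Real.sqrt (k * Real.log (8 / β))}
      ≥ ENNReal.ofReal (1 - β) := by
  have hE : 1 < exp ε := by linarith [add_one_lt_exp hε.ne']
  have hR : 0 < (exp ε + 3) / (exp ε - 1) := div_pos (by linarith) (by linarith)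
  set t := √(k * log (8 / β)) / √2 with ht
  have hL : 0 ≤ log (8 / β) := log_nonneg (by rw [le_div_iff₀ hβ0]; linarith)
  have hexponent : -2 * t ^ 2 / k = log (β / 8) := by
    have hk0 : (k : ℝ) ≠ 0 := by norm_cast; omega
    rw [ht, div_pow, sq_sqrt (by positivity), sq_sqrt zero_le_two, ← inv_div 8 β, log_inv]
    field_simp
  have hfailure : Fintype.card (Fin 4) * (2 * exp (-2 * t ^ 2 / Fintype.card (Fin k))) = β := by
    rw [Fintype.card_fin, Fintype.card_fin, hexponent, exp_log (by positivity)]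
    push_cast
    ring
  have hmean := sum_measureReal_eq_card_mul_add (μ := μ) (by positivity) (by positivity) hlaw
  simp only [Fintype.card_fin] at hmean
  have hscale : (exp ε + 3) / (exp ε - 1) * t ≤ (ε + 4) / (ε * √2) * √(k * log (8 / β)) :=
    calc (exp ε + 3) / (exp ε - 1) * t ≤ (ε + 4) / ε * t :=
          mul_le_mul_of_nonneg_right (exp_add_three_div_exp_sub_one_lt hε).le (by positivity)
      _ = _ := by rw [ht]; field_simp
  have hgood := one_sub_card_mul_le_measureReal_forall_abs_card_sub_sum_le (μ := μ) hmeas hindep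
    (by positivity : 0 ≤ t)
  rw [hfailure] at hgood
  rw [ge_iff_le, ENNReal.ofReal_le_iff_le_toReal (measure_ne_top _ _)]
  refine hgood.trans (measureReal_mono fun ω hω a ↦ ?_)
  calc _ = (exp ε + 3) / (exp ε - 1) *
        |(#{i | Y i ω = a} : ℝ) - ∑ i, μ.real {ω | Y i ω = a}| := by
        rw [rr_debias_sub_eq hE, hmean, abs_mul, abs_of_pos hR]
    _ ≤ (exp ε + 3) / (exp ε - 1) * t := mul_le_mul_of_nonneg_left (hω a) hR.le
    _ ≤ _ := hscale
end
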